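/- Let σ > 0, let D ≥ 1, and let w_1, …, w_D be independent random vectors in ℝ^d whose coordinates are independent real Gaussian random variables with mean 0 and variance 1/σ². Let q, k_1, …, k_M ∈ ℝ^d be unit vectors and v_1, …, v_M ∈ ℝ^d. Then E[Σ_{i=1}^M (φ(q) · φ(k_i)) v_i] = exp(−1/σ²) · Σ_{i=1}^M exp(q·k_i/σ²) v_i and E[φ(q) · Σ_{j=1}^M φ(k_j)] = exp(−1/σ²) · Σ_{j=1}^M exp(q·k_j/σ²); that is, the numerator and denominator of RFA are unbiased estimators of the numerator and denominator of softmax attention, up to the common positive factor exp(−1/σ²). -/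

import Mathlib

/-!
Writing `z = a - b`, the cosine subtraction formula gives
`φ(a) · φ(b) = D⁻¹ ∑ₗ cos (wₗ · z)`. For a Gaussian vector `w` with independent `N(0, v)`
coordinates, the characteristic functions of the coordinates multiply, so `w · z` is
`N(0, ‖z‖² v)` and `E cos (w · z) = exp (-‖z‖² v / 2)`: random Fourier features estimate the
Gaussian kernel without bias. For unit vectors `‖q - k‖² = 2 - 2 q · k`, which splits this kernel
into `exp (-1/σ²) · exp (q · k / σ²)`; linearity of expectation does the rest.
-/

open scoped RealInnerProductSpace BigOperators
open MeasureTheory ProbabilityTheory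

/-- The random feature map `φ(x) = D^{-1/2} (sin(w₁·x), …, sin(w_D·x), cos(w₁·x), …, cos(w_D·x))`. -/
noncomputable def randomFeatureMap {d D : ℕ} (w : Fin D → EuclideanSpace ℝ (Fin d))
    (x : EuclideanSpace ℝ (Fin d)) : EuclideanSpace ℝ (Fin D ⊕ Fin D) :=
  WithLp.toLp 2 (fun i => Real.sqrt (1 / D) *
    Sum.elim (fun j => Real.sin ⟪w j, x⟫) (fun j => Real.cos ⟪w j, x⟫) i)

open scoped NNReal

theorem inner_randomFeatureMap {d D : ℕ} (w : Fin D → EuclideanSpace ℝ (Fin d))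
    (a b : EuclideanSpace ℝ (Fin d)) :
    ⟪randomFeatureMap w a, randomFeatureMap w b⟫ = (D : ℝ)⁻¹ * ∑ l, Real.cos ⟪w l, a - b⟫ := by
  have hsq : Real.sqrt (1 / D) * Real.sqrt (1 / D) = (D : ℝ)⁻¹ := by
    rw [Real.mul_self_sqrt (by positivity), one_div]
  simp only [randomFeatureMap, PiLp.inner_apply, Fintype.sum_sum_type, Sum.elim_inl, Sum.elim_inr,
    RCLike.inner_apply, conj_trivial, ← Finset.sum_add_distrib, Finset.mul_sum, inner_sub_right,
    Real.cos_sub]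
  refine Finset.sum_congr rfl fun l _ => ?_
  linear_combination (Real.sin ⟪w l, a⟫ * Real.sin ⟪w l, b⟫ +
      Real.cos ⟪w l, a⟫ * Real.cos ⟪w l, b⟫) * hsq

theorem integral_cos_gaussianReal (m : ℝ) (v : ℝ≥0) :
    ∫ x, Real.cos x ∂gaussianReal m v = Real.cos m * Real.exp (-(v / 2)) := by
  have hexp : Integrable (fun x : ℝ => Complex.exp (x * Complex.I)) (gaussianReal m v) :=
    (integrable_const (1 : ℝ)).mono' (by fun_prop)
      (ae_of_all _ fun x => (Complex.norm_exp_ofReal_mul_I x).le)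
  have hchar := congrArg Complex.re (charFun_gaussianReal (μ := m) (v := v) 1)
  simp only [charFun_apply_real, Complex.ofReal_one, one_mul, one_pow, mul_one] at hchar
  rw [← RCLike.re_to_complex, ← integral_re hexp] at hchar
  simpa [Complex.exp_ofReal_mul_I_re, Complex.exp_re, mul_comm, neg_div] using hchar

section

variable {Ω : Type*} {mΩ : MeasurableSpace Ω} {P : Measure Ω} [IsProbabilityMeasure P] {v : ℝ≥0}
  {ι : Type*} [Fintype ι] {w : Ω → EuclideanSpace ℝ ι}

theorem map_inner_eq_gaussianReal (hindep : iIndepFun (fun i ω => w ω i) P)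
    (hgauss : ∀ i, P.map (fun ω => w ω i) = gaussianReal 0 v) (z : EuclideanSpace ℝ ι) :
    P.map (fun ω => ⟪w ω, z⟫) = gaussianReal 0 (‖z‖₊ ^ 2 * v) := by
  have hmeas : ∀ i, AEMeasurable (fun ω => w ω i) P := fun i =>
    aemeasurable_of_map_neZero (by rw [hgauss i]; infer_instance)
  have hscaled : iIndepFun (fun i ω => z i * w ω i) P :=
    hindep.comp (fun i x => z i * x) fun i => measurable_const_mul (z i)
  refine Measure.ext_of_charFun (funext fun t => ?_)
  simp only [PiLp.inner_apply, RCLike.inner_apply, conj_trivial]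
  rw [hscaled.charFun_map_fun_sum_eq_prod fun i => (hmeas i).const_mul (z i)]
  simp only [Finset.prod_apply, charFun_map_mul_comp (hmeas _), hgauss, charFun_gaussianReal,
    ← Complex.exp_sum]
  congr 1
  push_cast
  rw [← Complex.ofReal_pow, EuclideanSpace.real_norm_sq_eq]
  push_cast
  simp only [mul_zero, zero_mul, zero_sub, Finset.sum_neg_distrib, Finset.sum_mul, Finset.sum_div]
  exact congrArg _ (Finset.sum_congr rfl fun i _ => by ring)

theorem integrable_cos_inner_of_gaussian (hindep : iIndepFun (fun i ω => w ω i) P)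
    (hgauss : ∀ i, P.map (fun ω => w ω i) = gaussianReal 0 v) (z : EuclideanSpace ℝ ι) :
    Integrable (fun ω => Real.cos ⟪w ω, z⟫) P := by
  have hmeas : AEMeasurable (fun ω => ⟪w ω, z⟫) P := aemeasurable_of_map_neZero
    (by rw [map_inner_eq_gaussianReal hindep hgauss z]; infer_instance)
  exact (integrable_const (1 : ℝ)).mono'
    (Real.continuous_cos.comp_aestronglyMeasurable hmeas.aestronglyMeasurable)
    (ae_of_all _ fun ω => by simpa using Real.abs_cos_le_one _)

theorem integral_cos_inner_of_gaussian (hindep : iIndepFun (fun i ω => w ω i) P)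
    (hgauss : ∀ i, P.map (fun ω => w ω i) = gaussianReal 0 v) (z : EuclideanSpace ℝ ι) :
    ∫ ω, Real.cos ⟪w ω, z⟫ ∂P = Real.exp (-(‖z‖ ^ 2 * v / 2)) := by
  have hlaw := map_inner_eq_gaussianReal hindep hgauss z
  have hmeas : AEMeasurable (fun ω => ⟪w ω, z⟫) P :=
    aemeasurable_of_map_neZero (by rw [hlaw]; infer_instance)
  rw [← integral_map hmeas Real.continuous_cos.aestronglyMeasurable, hlaw,
    integral_cos_gaussianReal]
  simp

variable {d D : ℕ} {W : Fin D → Ω → EuclideanSpace ℝ (Fin d)}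

theorem integrable_inner_randomFeatureMap (hindep : ∀ l, iIndepFun (fun j ω => W l ω j) P)
    (hgauss : ∀ l j, P.map (fun ω => W l ω j) = gaussianReal 0 v) (a b : EuclideanSpace ℝ (Fin d)) :
    Integrable (fun ω => ⟪randomFeatureMap (fun l => W l ω) a, randomFeatureMap (fun l => W l ω) b⟫)
      P := by
  simp only [inner_randomFeatureMap]
  exact (integrable_finsetSum _ fun l _ =>
    integrable_cos_inner_of_gaussian (hindep l) (hgauss l) (a - b)).const_mul _

theorem integral_inner_randomFeatureMap (hD : D ≠ 0)
    (hindep : ∀ l, iIndepFun (fun j ω => W l ω j) P)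
    (hgauss : ∀ l j, P.map (fun ω => W l ω j) = gaussianReal 0 v) (a b : EuclideanSpace ℝ (Fin d)) :
    ∫ ω, ⟪randomFeatureMap (fun l => W l ω) a, randomFeatureMap (fun l => W l ω) b⟫ ∂P
      = Real.exp (-(‖a - b‖ ^ 2 * v / 2)) := by
  simp only [inner_randomFeatureMap]
  rw [integral_const_mul, integral_finsetSum _ fun l _ =>
    integrable_cos_inner_of_gaussian (hindep l) (hgauss l) (a - b)]
  simp only [integral_cos_inner_of_gaussian (hindep _) (hgauss _), Finset.sum_const,
    Finset.card_univ, Fintype.card_fin, nsmul_eq_mul]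
  field_simp

end

/-- The numerator and denominator of RFA are unbiased estimators of the numerator and
denominator of softmax attention, up to the common positive factor `exp(−1/σ²)`:
`E[∑ᵢ (φ(q)·φ(kᵢ)) vᵢ] = exp(−1/σ²) ∑ᵢ exp(q·kᵢ/σ²) vᵢ` and
`E[φ(q) · ∑ⱼ φ(kⱼ)] = exp(−1/σ²) ∑ⱼ exp(q·kⱼ/σ²)`. -/
theorem rfa_unbiased_numerator_denominator {d D M : ℕ} (hD : 1 ≤ D) (σ : ℝ)
    {Ω : Type*} [MeasurableSpace Ω] (μ : Measure Ω) [IsProbabilityMeasure μ]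
    (W : Fin D → Ω → EuclideanSpace ℝ (Fin d))
    (hindep : iIndepFun
      (fun (p : Fin D × Fin d) ω => W p.1 ω p.2) μ)
    (hgauss : ∀ (i : Fin D) (j : Fin d),
      Measure.map (fun ω => W i ω j) μ = gaussianReal 0 ⟨1 / σ ^ 2, by positivity⟩)
    (q : EuclideanSpace ℝ (Fin d)) (k : Fin M → EuclideanSpace ℝ (Fin d))
    (v : Fin M → EuclideanSpace ℝ (Fin d))
    (hq : ‖q‖ = 1) (hk : ∀ i, ‖k i‖ = 1) :
    (∫ ω, (∑ i : Fin M,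
        ⟪randomFeatureMap (fun l => W l ω) q, randomFeatureMap (fun l => W l ω) (k i)⟫ • v i) ∂μ
      = Real.exp (-1 / σ ^ 2) • ∑ i : Fin M, Real.exp (⟪q, k i⟫ / σ ^ 2) • v i) ∧
    (∫ ω, ⟪randomFeatureMap (fun l => W l ω) q,
        ∑ j : Fin M, randomFeatureMap (fun l => W l ω) (k j)⟫ ∂μ
      = Real.exp (-1 / σ ^ 2) * ∑ j : Fin M, Real.exp (⟪q, k j⟫ / σ ^ 2)) := by
  have hindep_coord l : iIndepFun (fun j ω => W l ω j) μ :=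
    hindep.precomp (Prod.mk_right_injective l)
  have hint i := integrable_inner_randomFeatureMap hindep_coord hgauss q (k i)
  have hmean i : ∫ ω, ⟪randomFeatureMap (fun l => W l ω) q,
        randomFeatureMap (fun l => W l ω) (k i)⟫ ∂μ
      = Real.exp (-1 / σ ^ 2) * Real.exp (⟪q, k i⟫ / σ ^ 2) := by
    rw [integral_inner_randomFeatureMap (by omega) hindep_coord hgauss]
    change Real.exp (-(‖q - k i‖ ^ 2 * (1 / σ ^ 2) / 2)) = _
    rw [norm_sub_sq_real, hq, hk i, ← Real.exp_add]
    ring_nf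
  constructor
  · rw [integral_finsetSum _ fun i _ => (hint i).smul_const (v i), Finset.smul_sum]
    refine Finset.sum_congr rfl fun i _ => ?_
    rw [integral_smul_const, hmean i, mul_smul]
  · simp only [inner_sum]
    rw [integral_finsetSum _ fun i _ => hint i, Finset.mul_sum]
    exact Finset.sum_congr rfl fun i _ => hmean i
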